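/- arXiv:2407.13527 — 7 statements merged into one kernel-verified Lean document; each statement's English description precedes it below -/
import Mathlib

section
/- Let C ⊆ F_q^n be a k-dimensional F_q-linear code (1 ≤ k < n), let K be a finite field of characteristic p with q^k elements, and let D ⊆ K^m be a K-linear code that is neither {0} nor all of K^m and such that for every 1 ≤ i ≤ m there exists Λ ∈ D whose i-th coordinate equals 1. Let (f_λ)_{λ∈K} and (f'_λ)_{λ∈K} be families of functions C → F_p such that the matrices H = [ω^{f_λ(c)}]_{λ∈K,c∈C} and H' = [ω^{f'_λ(c)}]_{λ∈K,c∈C} are both BH(q^k,p) matrices (i.e., H H† = q^k I and H' H'† = q^k I). If span_ℂ{Φ_Λ : Λ ∈ D} = span_ℂ{Φ'_Λ : Λ ∈ D}, then H and H' are row-equivalent: there exist a bijection σ : K → K and b : K → F_p such that f_λ(c) = b(λ) + f'_{σ(λ)}(c) for all λ ∈ K and c ∈ C. -/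
open Matrix

attribute [local instance] Classical.propDecidable

/-- `ω^a` where `ω = exp(2πi/p)` and `a : ZMod p`. -/
noncomputable def omg (p : ℕ) (a : ZMod p) : ℂ :=
  Complex.exp (2 * Real.pi * Complex.I * (a.val : ℂ) / (p : ℂ))

/-!
Put `N = q^k = |C| = |K|`, `P = [ω^{f_λ(c)}]`, `P' = [ω^{f'_λ(c)}]` and `U = N⁻¹ P P'ᴴ`. Since `P'`
is square up to reindexing, `P'ᴴ P' = N` as well, so `U` is unitary; and
`⟨Φ_Λ, Φ'_M⟩ = ∏ᵢ U(λᵢ, μᵢ)`. As `Φ_Λ` lies in the span of the orthonormal family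
`(Φ'_M)_{M ∈ D}`, this overlap vanishes unless `M ∈ D`. If `U(λ, μ)` and `U(λ, μ')` were nonzero
with `μ ≠ μ'`, then starting from some `Λ ∈ D` with `Λᵢ = λ` one would find two vectors of `D`
differing only in coordinate `i`, by `μ - μ'`; so `D` would contain every unit vector, i.e.
`D = K^m`. Hence `U` is a unitary monomial matrix, `|U(λ, σλ)| = 1`, and
`∑_c ω^{f_λ(c) - f'_{σλ}(c)}` is a sum of `N` unit complex numbers of modulus `N`: by strict
convexity all its terms are equal.
-/

section omg

variable {p : ℕ} [NeZero p]

lemma omg_eq_toCircle (a : ZMod p) : omg p a = ZMod.toCircle a := by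
  rw [omg, ZMod.toCircle_apply]

lemma norm_omg (a : ZMod p) : ‖omg p a‖ = 1 := by
  rw [omg_eq_toCircle, Circle.norm_coe]

lemma omg_sub (a b : ZMod p) : omg p (a - b) = omg p a * starRingEnd ℂ (omg p b) := by
  rw [omg_eq_toCircle, omg_eq_toCircle, omg_eq_toCircle, AddChar.map_sub_eq_div, div_eq_mul_inv,
    Circle.coe_mul, Circle.coe_inv_eq_conj]

lemma omg_injective : Function.Injective (omg p) := fun a b h => by
  rw [omg_eq_toCircle, omg_eq_toCircle, Circle.coe_inj] at h
  exact ZMod.injective_toCircle h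

end omg

lemma eq_of_norm_sum_eq_card {V ι : Type*} [NormedAddCommGroup V] [NormedSpace ℝ V]
    [StrictConvexSpace ℝ V] [Fintype ι] {z : ι → V} (hz : ∀ i, ‖z i‖ ≤ 1)
    (hsum : ‖∑ i, z i‖ = Fintype.card ι) (i j : ι) : z i = z j := by
  by_contra hij
  have hcard : (0 : ℝ) < Fintype.card ι := by
    exact_mod_cast Fintype.card_pos_iff.2 ⟨i⟩
  have hlt := norm_sum_lt_of_strictConvexSpace (t := Finset.univ)
    (w := fun _ => (Fintype.card ι : ℝ)⁻¹) (fun _ _ => by positivity)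
    (by simp [hcard.ne']) (Finset.mem_univ i) (Finset.mem_univ j) hij
    (inv_ne_zero hcard.ne') (inv_ne_zero hcard.ne') (fun k _ => hz k)
  rw [← Finset.smul_sum, norm_smul, hsum, Real.norm_of_nonneg (by positivity),
    inv_mul_cancel₀ hcard.ne'] at hlt
  exact lt_irrefl _ hlt

section unitary

variable {κ ι α : Type*} [Fintype κ] [Fintype ι] [DecidableEq κ] [DecidableEq ι]

lemma mul_conjTranspose_mem_unitaryGroup [CommRing α] [StarRing α] (e : ι ≃ κ)
    {A B : Matrix κ ι α} (hA : A * Aᴴ = 1) (hB : B * Bᴴ = 1) :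
    A * Bᴴ ∈ unitaryGroup κ α := by
  have hB' : Bᴴ * B = 1 := (mul_eq_one_comm_of_equiv e.symm).1 hB
  rw [mem_unitaryGroup_iff, star_eq_conjTranspose, conjTranspose_mul, conjTranspose_conjTranspose,
    Matrix.mul_assoc, ← Matrix.mul_assoc Bᴴ, hB', Matrix.one_mul, hA]

lemma exists_ne_zero_of_mem_unitaryGroup [CommRing α] [StarRing α] [Nontrivial α]
    {U : Matrix κ κ α} (hU : U ∈ unitaryGroup κ α) (i : κ) : ∃ j, U i j ≠ 0 := by
  by_contra! h
  have hii := congrFun (congrFun (mem_unitaryGroup_iff.1 hU) i) i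
  simp [mul_apply, h] at hii

lemma exists_equiv_norm_eq_one_of_mem_unitaryGroup {U : Matrix κ κ ℂ}
    (hU : U ∈ unitaryGroup κ ℂ) (huniq : ∀ i j j', U i j ≠ 0 → U i j' ≠ 0 → j = j') :
    ∃ σ : κ ≃ κ, ∀ i, ‖U i (σ i)‖ = 1 := by
  choose σ hσ using exists_ne_zero_of_mem_unitaryGroup hU
  have hrow : ∀ i i', (U * star U) i i' = U i (σ i) * starRingEnd ℂ (U i' (σ i)) := by
    intro i i'
    refine (Finset.sum_eq_single (σ i) (fun j _ hj => ?_) (by simp)).trans rfl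
    by_contra h
    exact hj (huniq i j (σ i) (left_ne_zero_of_mul h) (hσ i))
  rw [mem_unitaryGroup_iff] at hU
  have hinj : Function.Injective σ := fun i i' hii' => by
    by_contra hne
    have h := hrow i i'
    rw [hU, one_apply_ne hne] at h
    exact mul_ne_zero (hσ i) ((map_ne_zero _).2 (by rw [hii']; exact hσ i')) h.symm
  refine ⟨Equiv.ofBijective σ hinj.bijective_of_finite, fun i => ?_⟩
  have h := hrow i i
  rw [hU, one_apply_eq, Complex.mul_conj, Complex.normSq_eq_norm_sq] at h
  exact (pow_eq_one_iff_of_nonneg (norm_nonneg _) two_ne_zero).1 (by exact_mod_cast h.symm)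

end unitary

lemma inv_sqrt_smul_mul_conjTranspose {κ ι : Type*} [Fintype ι] {N : ℝ} (hN : 0 ≤ N)
    (A B : Matrix κ ι ℂ) :
    (((√N)⁻¹ : ℝ) : ℂ) • A * ((((√N)⁻¹ : ℝ) : ℂ) • B)ᴴ = ((N⁻¹ : ℝ) : ℂ) • (A * Bᴴ) := by
  rw [conjTranspose_smul, Matrix.smul_mul, Matrix.mul_smul, smul_smul, Complex.star_def,
    Complex.conj_ofReal, ← Complex.ofReal_mul, ← mul_inv, Real.mul_self_sqrt hN]

section support

variable {ι K R : Type*} [DecidableEq ι] [Field K] [Zero R]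
  (D : Submodule K (ι → K)) (U : K → K → R)

lemma single_mem_of_ne_zero_of_ne_zero (hcoord : ∀ i, ∃ Λ ∈ D, Λ i = 1)
    (hrow : ∀ a, ∃ b, U a b ≠ 0)
    (hsupp : ∀ Λ ∈ D, ∀ M : ι → K, (∀ i, U (Λ i) (M i) ≠ 0) → M ∈ D)
    {a b b' : K} (hb : U a b ≠ 0) (hb' : U a b' ≠ 0) (hne : b ≠ b') (i : ι) :
    Pi.single i 1 ∈ D := by
  obtain ⟨Λ, hΛ, hΛi⟩ := hcoord i
  choose ν hν using fun j => hrow ((a • Λ) j)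
  have hupdate : ∀ w, U a w ≠ 0 → Function.update ν i w ∈ D := fun w hw =>
    hsupp _ (D.smul_mem a hΛ) _ fun j => by
      rcases eq_or_ne j i with rfl | hj
      · simpa [hΛi] using hw
      · rw [Function.update_of_ne hj]
        exact hν j
  have hsub : Function.update ν i b - Function.update ν i b' = Pi.single i (b - b') := by
    ext j
    rcases eq_or_ne j i with rfl | hj <;> simp [*]
  have := D.smul_mem (b - b')⁻¹ (hsub ▸ D.sub_mem (hupdate b hb) (hupdate b' hb'))
  rwa [← Pi.single_smul, smul_eq_mul, inv_mul_cancel₀ (sub_ne_zero.2 hne)] at this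

lemma eq_of_ne_zero_of_ne_top [Fintype ι] (hD : D ≠ ⊤) (hcoord : ∀ i, ∃ Λ ∈ D, Λ i = 1)
    (hrow : ∀ a, ∃ b, U a b ≠ 0)
    (hsupp : ∀ Λ ∈ D, ∀ M : ι → K, (∀ i, U (Λ i) (M i) ≠ 0) → M ∈ D)
    {a b b' : K} (hb : U a b ≠ 0) (hb' : U a b' ≠ 0) : b = b' := by
  by_contra hne
  refine hD (eq_top_iff.2 ?_)
  rw [← (Pi.basisFun K ι).span_eq, Submodule.span_le]
  rintro _ ⟨i, rfl⟩
  rw [Pi.basisFun_apply]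
  exact single_mem_of_ne_zero_of_ne_zero D U hcoord hrow hsupp hb hb' hne i

end support

section states

variable {R : Type*} [CommSemiring R] [StarRing R]

lemma dotProduct_star_pi_prod {ι α : Type*} [Fintype ι] [DecidableEq ι] [Fintype α]
    (g h : ι → α → R) :
    (fun x : ι → α => ∏ i, g i (x i)) ⬝ᵥ star (fun x => ∏ i, h i (x i)) =
      ∏ i, g i ⬝ᵥ star (h i) := by
  simp only [dotProduct, Pi.star_apply, star_prod, ← Finset.prod_mul_distrib]
  exact (Fintype.prod_sum fun i a => g i a * star (h i a)).symm

lemma dotProduct_star_dite_mem {V S : Type*} [Fintype V] [SetLike S V] (C : S)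
    [DecidablePred (· ∈ C)] (a b : C → R) :
    (fun v => if hv : v ∈ C then a ⟨v, hv⟩ else 0) ⬝ᵥ
      star (fun v => if hv : v ∈ C then b ⟨v, hv⟩ else 0) = a ⬝ᵥ star b := by
  simp only [dotProduct, Pi.star_apply, apply_dite star, star_zero, dite_mul, zero_mul]
  rw [← Fintype.sum_subtype_add_sum_subtype (· ∈ C),
    Finset.sum_eq_zero fun (v : {v // v ∉ C}) _ => dif_neg v.2, add_zero]
  simp

lemma mem_of_dotProduct_star_ne_zero {X ι : Type*} [Fintype X] {χ : ι → X → R}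
    (hχ : ∀ M M', M ≠ M' → χ M ⬝ᵥ star (χ M') = 0) {D : Set ι} {ψ : X → R}
    (hψ : ψ ∈ Submodule.span R (χ '' D)) {M : ι} (h : ψ ⬝ᵥ star (χ M) ≠ 0) : M ∈ D := by
  by_contra hM
  refine h ?_
  clear h
  induction hψ using Submodule.span_induction with
  | mem v hv =>
    obtain ⟨M', hM', rfl⟩ := hv
    exact hχ M' M (by rintro rfl; exact hM hM')
  | zero => exact zero_dotProduct _
  | add u v _ _ hu hv => rw [add_dotProduct, hu, hv, add_zero]
  | smul c v _ hv => rw [smul_dotProduct, hv, smul_zero]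

end states

noncomputable def phaseMatrix (p : ℕ) {κ ι : Type*} (g : κ → ι → ZMod p) : Matrix κ ι ℂ :=
  of fun a c => omg p (g a c)

section phaseMatrix

variable {p : ℕ} {κ ι : Type*} [Fintype ι]

lemma phaseMatrix_mul_conjTranspose_apply (g g' : κ → ι → ZMod p) (a b : κ) :
    (phaseMatrix p g * (phaseMatrix p g')ᴴ) a b =
      ∑ c, omg p (g a c) * starRingEnd ℂ (omg p (g' b c)) :=
  rfl

lemma inv_sqrt_smul_phaseMatrix_mul_conjTranspose_self [DecidableEq κ] {N : ℕ} (hN : 0 < N)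
    {g : κ → ι → ZMod p}
    (hg : ∀ a b,
      ∑ c, omg p (g a c) * starRingEnd ℂ (omg p (g b c)) = if a = b then (N : ℂ) else 0) :
    (((√(N : ℝ))⁻¹ : ℝ) : ℂ) • phaseMatrix p g * ((((√(N : ℝ))⁻¹ : ℝ) : ℂ) • phaseMatrix p g)ᴴ
      = 1 := by
  rw [inv_sqrt_smul_mul_conjTranspose (Nat.cast_nonneg N)]
  ext a b
  rw [Matrix.smul_apply, phaseMatrix_mul_conjTranspose_apply, hg, one_apply]
  split_ifs <;> simp [hN.ne']

lemma sub_eq_sub_of_norm_phaseMatrix_mul_conjTranspose_eq_card [NeZero p] {g g' : κ → ι → ZMod p}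
    {a b : κ} (h : ‖(phaseMatrix p g * (phaseMatrix p g')ᴴ) a b‖ = Fintype.card ι) (c c' : ι) :
    g a c - g' b c = g a c' - g' b c' := by
  simp only [phaseMatrix_mul_conjTranspose_apply, ← omg_sub] at h
  exact omg_injective (eq_of_norm_sum_eq_card (fun c => (norm_omg _).le) h c c')

lemma dotProduct_star_prod_dite_omg {ι' V S : Type*} [Fintype ι'] [DecidableEq ι'] [Fintype V]
    [SetLike S V] (C : S) [DecidablePred (· ∈ C)] (s : ℂ) (g g' : κ → C → ZMod p) (Λ M : ι' → κ) :
    (fun x : ι' → V => ∏ i, if hx : x i ∈ C then s * omg p (g (Λ i) ⟨x i, hx⟩) else 0) ⬝ᵥ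
      star (fun x : ι' → V => ∏ i, if hx : x i ∈ C then s * omg p (g' (M i) ⟨x i, hx⟩) else 0) =
    ∏ i, (s • phaseMatrix p g * (s • phaseMatrix p g')ᴴ) (Λ i) (M i) := by
  rw [dotProduct_star_pi_prod (fun i v => if hv : v ∈ C then s * omg p (g (Λ i) ⟨v, hv⟩) else 0)
    (fun i v => if hv : v ∈ C then s * omg p (g' (M i) ⟨v, hv⟩) else 0)]
  exact Finset.prod_congr rfl fun i _ => (dotProduct_star_dite_mem C
    (fun c => s * omg p (g (Λ i) c)) (fun c => s * omg p (g' (M i) c))).trans rfl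

end phaseMatrix

theorem stmt_3_general (p r n k m : ℕ) [Fact p.Prime]
    (F K : Type) [Field F] [Fintype F] (hF : Fintype.card F = p ^ r)
    [Field K] [Fintype K] (hKcard : Fintype.card K = (p ^ r) ^ k)
    (C : Submodule F (Fin n → F)) (hC : Module.finrank F C = k)
    (D : Submodule K (Fin m → K)) (hD1 : D ≠ ⊤)
    (hDcoord : ∀ i : Fin m, ∃ Λ ∈ D, Λ i = 1)
    (f f' : K → ↥C → ZMod p)
    (hH : ∀ lam mu : K,
      ∑ c : ↥C, omg p (f lam c) * (starRingEnd ℂ) (omg p (f mu c))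
        = if lam = mu then (((p ^ r) ^ k : ℕ) : ℂ) else 0)
    (hH' : ∀ lam mu : K,
      ∑ c : ↥C, omg p (f' lam c) * (starRingEnd ℂ) (omg p (f' mu c))
        = if lam = mu then (((p ^ r) ^ k : ℕ) : ℂ) else 0)
    (Φ Φ' : (Fin m → K) → (Fin m → Fin n → F) → ℂ)
    (hΦ : ∀ Λ x, Φ Λ x = ∏ i : Fin m,
      (if hx : x i ∈ C then (Real.sqrt ((p ^ r) ^ k))⁻¹ * omg p (f (Λ i) ⟨x i, hx⟩) else 0))
    (hΦ' : ∀ Λ x, Φ' Λ x = ∏ i : Fin m,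
      (if hx : x i ∈ C then (Real.sqrt ((p ^ r) ^ k))⁻¹ * omg p (f' (Λ i) ⟨x i, hx⟩) else 0))
    (hspan : Submodule.span ℂ (Φ '' (D : Set (Fin m → K)))
      = Submodule.span ℂ (Φ' '' (D : Set (Fin m → K)))) :
    ∃ (σ : K ≃ K) (b : K → ZMod p), ∀ (lam : K) (c : ↥C), f lam c = b lam + f' (σ lam) c := by
  have hN : 0 < (p ^ r) ^ k := by have := (Fact.out : p.Prime).pos; positivity
  have hcardC : Fintype.card C = (p ^ r) ^ k := by
    rw [Module.card_eq_pow_finrank (K := F) (V := C), hF, hC]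
  rw [show ((p : ℝ) ^ r) ^ k = (((p ^ r) ^ k : ℕ) : ℝ) by push_cast; rfl] at hΦ hΦ'
  set s : ℂ := (((√(((p ^ r) ^ k : ℕ) : ℝ))⁻¹ : ℝ) : ℂ)
  set U := s • phaseMatrix p f * (s • phaseMatrix p f')ᴴ with hUdef
  have hU : U ∈ unitaryGroup K ℂ := mul_conjTranspose_mem_unitaryGroup
    (Fintype.equivOfCardEq (hcardC.trans hKcard.symm))
    (inv_sqrt_smul_phaseMatrix_mul_conjTranspose_self hN hH)
    (inv_sqrt_smul_phaseMatrix_mul_conjTranspose_self hN hH')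
  have horth : ∀ Λ M, Λ ≠ M → Φ' Λ ⬝ᵥ star (Φ' M) = 0 := fun Λ M hΛM => by
    rw [funext (hΦ' Λ), funext (hΦ' M), dotProduct_star_prod_dite_omg C s f' f',
      inv_sqrt_smul_phaseMatrix_mul_conjTranspose_self hN hH']
    obtain ⟨i, hi⟩ := Function.ne_iff.1 hΛM
    exact Finset.prod_eq_zero (Finset.mem_univ i) (one_apply_ne hi)
  have hsupp : ∀ Λ ∈ D, ∀ M, (∀ i, U (Λ i) (M i) ≠ 0) → M ∈ D := fun Λ hΛ M hM =>
    mem_of_dotProduct_star_ne_zero horth (hspan ▸ Submodule.subset_span (Set.mem_image_of_mem Φ hΛ))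
      (by rw [funext (hΦ Λ), funext (hΦ' M), dotProduct_star_prod_dite_omg C s f f']
          exact Finset.prod_ne_zero_iff.2 fun i _ => hM i)
  obtain ⟨σ, hσ⟩ := exists_equiv_norm_eq_one_of_mem_unitaryGroup hU fun a b b' =>
    eq_of_ne_zero_of_ne_top D U hD1 hDcoord (exists_ne_zero_of_mem_unitaryGroup hU) hsupp
  refine ⟨σ, fun a => f a 0 - f' (σ a) 0, fun a c => ?_⟩
  have hnorm : ‖(phaseMatrix p f * (phaseMatrix p f')ᴴ) a (σ a)‖ = Fintype.card C := by
    have h := hσ a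
    rw [hUdef, inv_sqrt_smul_mul_conjTranspose (Nat.cast_nonneg _), Matrix.smul_apply, norm_smul,
      Complex.norm_real, norm_inv, Real.norm_natCast, inv_mul_eq_one₀ (by positivity)] at h
    rw [← h, hcardC]
  linear_combination sub_eq_sub_of_norm_phaseMatrix_mul_conjTranspose_eq_card hnorm c 0

/-- if two BH(q^k,p) matrices `H = [ω^{f_λ(c)}]` and `H' = [ω^{f'_λ(c)}]`
give rise to the same quantum code `Q_H(C,D) = Q_{H'}(C,D)` (for a nontrivial `D` each of
whose coordinates realizes the value 1), then `H` and `H'` are row-equivalent. -/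
theorem stmt_3 (p r n k m : ℕ) [Fact p.Prime] (hr : 0 < r) (hk1 : 1 ≤ k) (hkn : k < n)
    (F K : Type) [Field F] [Fintype F] [Algebra (ZMod p) F] (hF : Fintype.card F = p ^ r)
    [Field K] [Fintype K] [Algebra (ZMod p) K] (hKcard : Fintype.card K = (p ^ r) ^ k)
    (C : Submodule F (Fin n → F)) (hC : Module.finrank F C = k)
    (D : Submodule K (Fin m → K)) (hD0 : D ≠ ⊥) (hD1 : D ≠ ⊤)
    (hDcoord : ∀ i : Fin m, ∃ Λ ∈ D, Λ i = 1)
    (f f' : K → ↥C → ZMod p)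
    (hH : ∀ lam mu : K,
      ∑ c : ↥C, omg p (f lam c) * (starRingEnd ℂ) (omg p (f mu c))
        = if lam = mu then (((p ^ r) ^ k : ℕ) : ℂ) else 0)
    (hH' : ∀ lam mu : K,
      ∑ c : ↥C, omg p (f' lam c) * (starRingEnd ℂ) (omg p (f' mu c))
        = if lam = mu then (((p ^ r) ^ k : ℕ) : ℂ) else 0)
    (Φ Φ' : (Fin m → K) → (Fin m → Fin n → F) → ℂ)
    (hΦ : ∀ Λ x, Φ Λ x = ∏ i : Fin m,
      (if hx : x i ∈ C then (Real.sqrt ((p ^ r) ^ k))⁻¹ * omg p (f (Λ i) ⟨x i, hx⟩) else 0))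
    (hΦ' : ∀ Λ x, Φ' Λ x = ∏ i : Fin m,
      (if hx : x i ∈ C then (Real.sqrt ((p ^ r) ^ k))⁻¹ * omg p (f' (Λ i) ⟨x i, hx⟩) else 0))
    (hspan : Submodule.span ℂ (Φ '' (D : Set (Fin m → K)))
      = Submodule.span ℂ (Φ' '' (D : Set (Fin m → K)))) :
    ∃ (σ : K ≃ K) (b : K → ZMod p), ∀ (lam : K) (c : ↥C), f lam c = b lam + f' (σ lam) c :=
  stmt_3_general p r n k m F K hF hKcard C hC D hD1 hDcoord f f' hH hH' Φ Φ' hΦ hΦ' hspan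
end

section
/- Let C ⊆ F_q^n be a k-dimensional F_q-linear code (1 ≤ k < n), let K be a finite field of characteristic p with q^k elements, let κ : K → Hom_{F_p}(C, F_p) be an F_p-linear isomorphism, write f_λ = κ(λ), and let D ⊆ K^m be an s-dimensional K-linear code (1 ≤ s < m). Then span_ℂ{Φ_Λ : Λ ∈ D} equals the set of all v : (F_q^n)^m → ℂ such that X(c_1,…,c_m)Z(d_1,…,d_m)v = v for every (c_1,…,c_m) ∈ ⋂_{Λ∈D} ker(F_Λ) and every d_1,…,d_m ∈ C^⊥. In particular, the quantum code span_ℂ{Φ_Λ : Λ ∈ D} is a stabilizer code. -/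
/-!
Put `A = C^m` and `T = ⋂_{Λ ∈ D} ker F_Λ ⊆ A`. Since the trace form of `F_q / F_p` is
nondegenerate, for every `x ∉ A` some `Z(d)` with `d_i ∈ C^⊥` multiplies the value at `x` by a
nontrivial `p`-th root of unity, so a vector fixed by all these operators vanishes off `A`; on `A`
the `X(c)`, `c ∈ T`, say that it is `T`-periodic. On the other side, `Φ_Λ` is, up to the common
factor `q^{-km/2}`, the extension by zero of the character `c ↦ ω^{F_Λ(c)}` of `A`, and
`Λ ↦ F_Λ` is additive. These characters are `T`-periodic by definition of `T`; conversely, by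
orthogonality of the characters of the group `D`, Fourier inversion writes every `T`-periodic
function on `A` as a combination of them.
-/

open Matrix

attribute [local instance] Classical.propDecidable

lemma omg_eq_stdAddChar (p : ℕ) [NeZero p] (a : ZMod p) : omg p a = ZMod.stdAddChar a := by
  rw [ZMod.stdAddChar_apply, ZMod.toCircle_apply, omg]

lemma AddChar.map_sum_eq_prod {ι A M : Type*} [AddCommMonoid A] [CommMonoid M] (ψ : AddChar A M)
    (s : Finset ι) (f : ι → A) : ψ (∑ i ∈ s, f i) = ∏ i ∈ s, ψ (f i) :=
  map_prod ψ.toMonoidHom (fun i => Multiplicative.ofAdd (f i)) s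

def sumPairing {ι M N P : Type*} [Fintype ι] [AddCommMonoid M] [AddCommMonoid N]
    [AddCommMonoid P] (κ : M →+ N →+ P) : (ι → M) →+ (ι → N) →+ P :=
  ∑ i, (κ.compl₂ (Pi.evalAddMonoidHom (fun _ => N) i)).comp (Pi.evalAddMonoidHom (fun _ => M) i)

@[simp]
lemma sumPairing_apply {ι M N P : Type*} [Fintype ι] [AddCommMonoid M] [AddCommMonoid N]
    [AddCommMonoid P] (κ : M →+ N →+ P) (Λ : ι → M) (c : ι → N) :
    sumPairing κ Λ c = ∑ i, κ (Λ i) (c i) := by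
  simp [sumPairing]

section Fourier

variable {A B M : Type*} [AddCommGroup A] [AddCommGroup B] [AddCommMonoid M]

def periodicSubmodule (R : Type*) [Semiring R] (T : Set A) : Submodule R (A → R) where
  carrier := {v | ∀ t ∈ T, Function.Periodic v t}
  add_mem' hv hw t ht := (hv t ht).add (hw t ht)
  zero_mem' _ _ _ := rfl
  smul_mem' c _ hv t ht := (hv t ht).smul c

variable [Fintype B] (β : B →+ A →+ M) (ψ : AddChar M ℂ)

lemma sum_pairing_eq_ite (a : A) :
    ∑ b, ψ (β b a) = if ∀ b, ψ (β b a) = 1 then (Fintype.card B : ℂ) else 0 := by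
  simpa [AddChar.ext_iff] using AddChar.sum_eq_ite (ψ.compAddMonoidHom (β.flip a))

variable [Fintype A] in
theorem span_range_pairing_eq_periodicSubmodule :
    Submodule.span ℂ (Set.range fun b a => ψ (β b a))
      = periodicSubmodule ℂ {t | ∀ b, ψ (β b t) = 1} := by
  refine le_antisymm (Submodule.span_le.mpr ?_) fun v hv => ?_
  · rintro _ ⟨b, rfl⟩ t ht a
    simp [AddChar.map_add_eq_mul, ht b]
  set T := Finset.univ.filter fun t : A => ∀ b, ψ (β b t) = 1 with hT_def
  -- Fourier inversion; the factor `|B| |T|` comes from orthogonality of the characters of `B`.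
  have inversion : ∀ a, ∑ b, (∑ y, v y * ψ (β b (-y))) * ψ (β b a)
      = (Fintype.card B * T.card) * v a := by
    intro a
    calc ∑ b, (∑ y, v y * ψ (β b (-y))) * ψ (β b a)
        = ∑ y, v y * ∑ b, ψ (β b (a - y)) := by
          simp_rw [Finset.sum_mul, Finset.mul_sum, mul_assoc, ← AddChar.map_add_eq_mul,
            ← map_add, neg_add_eq_sub]
          exact Finset.sum_comm
      _ = ∑ t, v (a - t) * ∑ b, ψ (β b t) :=
          (Fintype.sum_equiv (Equiv.subLeft a) _ _ fun t => by
            simp only [Equiv.subLeft_apply, sub_sub_cancel]).symm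
      _ = ∑ t ∈ T, v a * Fintype.card B := by
          simp_rw [sum_pairing_eq_ite, hT_def, Finset.sum_filter]
          refine Finset.sum_congr rfl fun t _ => ?_
          split_ifs with ht
          · rw [(hv t ht).sub_eq]
          · rw [mul_zero]
      _ = (Fintype.card B * T.card) * v a := by
          rw [Finset.sum_const, nsmul_eq_mul]; ring
  have hB : (Fintype.card B : ℂ) ≠ 0 := Nat.cast_ne_zero.mpr Fintype.card_ne_zero
  have hT : (T.card : ℂ) ≠ 0 :=
    Nat.cast_ne_zero.mpr (Finset.card_ne_zero_of_mem (a := 0) (by simp [T]))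
  have hv_eq : v = ∑ b, ((Fintype.card B * T.card : ℂ)⁻¹ * ∑ y, v y * ψ (β b (-y))) •
      fun a => ψ (β b a) := by
    funext a
    simp only [Finset.sum_apply, Pi.smul_apply, smul_eq_mul, mul_assoc, ← Finset.mul_sum,
      inversion]
    field_simp
  rw [hv_eq]
  exact Submodule.sum_mem _ fun b _ => Submodule.smul_mem _ _ (Submodule.subset_span ⟨b, rfl⟩)

end Fourier

theorem Submodule.mem_map_extendByZero_iff {A V R : Type*} [Semiring R] {ι : A → V}
    (hι : Function.Injective ι) (P : Submodule R (A → R)) (v : V → R) :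
    v ∈ P.map (Function.ExtendByZero.linearMap R ι) ↔
      (∀ x ∉ Set.range ι, v x = 0) ∧ v ∘ ι ∈ P := by
  constructor
  · rintro ⟨u, hu, rfl⟩
    refine ⟨fun x hx => Function.extend_apply' _ _ _ hx, ?_⟩
    simpa [Function.comp_def, hι.extend_apply] using hu
  · rintro ⟨hsupp, hv⟩
    refine ⟨v ∘ ι, hv, funext fun x => ?_⟩
    by_cases hx : x ∈ Set.range ι
    · obtain ⟨a, rfl⟩ := hx
      simp [hι.extend_apply]
    · simp [Function.extend_apply' _ _ _ hx, hsupp x hx]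

lemma mem_range_val_comp_iff {ι V : Type*} {P : V → Prop} (x : ι → V) :
    x ∈ Set.range (Subtype.val ∘ · : (ι → Subtype P) → ι → V) ↔ ∀ i, P (x i) :=
  ⟨by rintro ⟨c, rfl⟩ i; exact (c i).2, fun h => ⟨fun i => ⟨x i, h i⟩, rfl⟩⟩

lemma prod_dite_eq_extend {ι V R : Type*} [Fintype ι] [CommMonoidWithZero R] {P : V → Prop}
    (g : ι → Subtype P → R) (x : ι → V) :
    ∏ i, (if h : P (x i) then g i ⟨x i, h⟩ else 0)
      = Function.extend (Subtype.val ∘ ·) (fun c => ∏ i, g i (c i)) 0 x := by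
  by_cases hx : ∀ i, P (x i)
  · obtain ⟨c, rfl⟩ := (mem_range_val_comp_iff x).mpr hx
    rw [Subtype.val_injective.comp_left.extend_apply]
    exact Finset.prod_congr rfl fun i _ => dif_pos (c i).2
  · obtain ⟨j, hj⟩ := not_forall.mp hx
    rw [Function.extend_apply' _ _ _ (mt (mem_range_val_comp_iff x).mp (not_forall.mpr ⟨j, hj⟩)),
      Pi.zero_apply]
    exact Finset.prod_eq_zero (Finset.mem_univ j) (dif_neg hj)

theorem exists_dotProduct_eq_zero_trace_ne_zero (K L : Type*) [Field K] [Field L] [Algebra K L]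
    [FiniteDimensional K L] [Algebra.IsSeparable K L] {ι : Type*} [Fintype ι]
    {C : Submodule L (ι → L)} {x : ι → L} (hx : x ∉ C) :
    ∃ d : ι → L, (∀ y ∈ C, d ⬝ᵥ y = 0) ∧ Algebra.trace K L (d ⬝ᵥ x) ≠ 0 := by
  classical
  obtain ⟨f, hfx, hfC⟩ := C.exists_dual_map_eq_bot_of_notMem hx inferInstance
  obtain ⟨b, hb⟩ : ∃ b, Algebra.trace K L (b * f x) ≠ 0 := by
    by_contra! h
    exact hfx ((traceForm_nondegenerate K L).1 _ fun b => by
      rw [Algebra.traceForm_apply, mul_comm]; exact h b)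
  have hdot : ∀ y, (dotProductEquiv L ι).symm (b • f) ⬝ᵥ y = b * f y := fun y => by
    rw [← dotProductEquiv_apply_apply, LinearEquiv.apply_symm_apply, LinearMap.smul_apply,
      smul_eq_mul]
  refine ⟨(dotProductEquiv L ι).symm (b • f), fun y hy => ?_, by rwa [hdot]⟩
  have hfy : f y ∈ C.map f := Submodule.mem_map_of_mem hy
  rw [hfC, Submodule.mem_bot] at hfy
  rw [hdot, hfy, mul_zero]

section Stabilizer

variable {K L : Type*} [Field K] [Field L] [Algebra K L] [FiniteDimensional K L]
  [Algebra.IsSeparable K L] {ι ι' : Type*} [Fintype ι] [Fintype ι']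
  {C : Submodule L (ι' → L)} {ψ : AddChar K ℂ}

lemma eq_zero_of_forall_orthogonal_fixed (hψ : Function.Injective ψ)
    {v : (ι → ι' → L) → ℂ} {x : ι → ι' → L} (hx : ¬ ∀ i, x i ∈ C)
    (hfix : ∀ d : ι → ι' → L, (∀ i, ∀ y ∈ C, d i ⬝ᵥ y = 0) →
      ψ (Algebra.trace K L (∑ i, d i ⬝ᵥ x i)) * v x = v x) :
    v x = 0 := by
  classical
  obtain ⟨j, hj⟩ := not_forall.mp hx
  obtain ⟨d, hdC, hdx⟩ := exists_dotProduct_eq_zero_trace_ne_zero K L hj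
  have hfixed := hfix (Pi.single j d) fun i y hy => by
    by_cases hij : i = j
    · subst hij; simpa using hdC y hy
    · simp [hij]
  have hψd : ψ (Algebra.trace K L (d ⬝ᵥ x j)) ≠ 1 := by
    rwa [← ψ.map_zero_eq_one, hψ.ne_iff]
  rw [Fintype.sum_eq_single j fun i hij => by simp [hij], Pi.single_eq_same] at hfixed
  have : (ψ (Algebra.trace K L (d ⬝ᵥ x j)) - 1) * v x = 0 := by linear_combination hfixed
  exact (mul_eq_zero.mp this).resolve_left (sub_ne_zero.mpr hψd)

theorem stabilizer_fixed_iff (hψ : Function.Injective ψ) {T : Set (ι → C)}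
    (hT : 0 ∈ T) (v : (ι → ι' → L) → ℂ) :
    (∀ (c : ι → C) (d : ι → ι' → L), c ∈ T → (∀ i, ∀ y ∈ C, d i ⬝ᵥ y = 0) →
      ∀ x : ι → ι' → L, ψ (Algebra.trace K L (∑ i, d i ⬝ᵥ (x i - (c i : ι' → L))))
        * v (fun i => x i - (c i : ι' → L)) = v x)
    ↔ (∀ x ∉ Set.range (Subtype.val ∘ · : (ι → C) → ι → ι' → L), v x = 0) ∧
      v ∘ (Subtype.val ∘ ·) ∈ periodicSubmodule ℂ T := by
  constructor
  · intro hfix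
    refine ⟨fun x hx => eq_zero_of_forall_orthogonal_fixed hψ (mt (mem_range_val_comp_iff x).mpr hx)
      fun d hd => by simpa using hfix 0 d hT hd x, fun t ht a => ?_⟩
    simpa [Function.comp_def] using (hfix t 0 ht (fun _ _ _ => zero_dotProduct _)
      (Subtype.val ∘ (a + t))).symm
  · rintro ⟨hsupp, hper⟩ c d hc hd x
    by_cases hx : ∀ i, x i ∈ C
    · obtain ⟨a, rfl⟩ := (mem_range_val_comp_iff x).mpr hx
      change ψ (Algebra.trace K L (∑ i, d i ⬝ᵥ ((a - c) i : ι' → L))) * v (Subtype.val ∘ (a - c))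
        = v (Subtype.val ∘ a)
      rw [Finset.sum_eq_zero fun i _ => hd i _ ((a - c) i).2, map_zero,
        AddChar.map_zero_eq_one, one_mul]
      exact (hper c hc).sub_eq a
    · have hxc : ¬ ∀ i, x i - (c i : ι' → L) ∈ C := fun h =>
        hx fun i => by simpa using add_mem (h i) (c i).2
      rw [hsupp x (mt (mem_range_val_comp_iff x).mp hx),
        hsupp _ (mt (mem_range_val_comp_iff _).mp hxc), mul_zero]

end Stabilizer

theorem stmt_7_general (p r n k m : ℕ) [Fact p.Prime]
    (F K : Type) [Field F] [Fintype F] [Algebra (ZMod p) F]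
    [Field K] [Fintype K] [Algebra (ZMod p) K]
    (C : Submodule F (Fin n → F))
    (κ : K ≃ₗ[ZMod p] (↥C →ₗ[ZMod p] ZMod p))
    (D : Submodule K (Fin m → K))
    (Φ : (Fin m → K) → (Fin m → Fin n → F) → ℂ)
    (hΦ : ∀ Λ x, Φ Λ x = ∏ i : Fin m,
      (if hx : x i ∈ C then (Real.sqrt ((p ^ r) ^ k))⁻¹ * omg p (κ (Λ i) ⟨x i, hx⟩) else 0)) :
    (Submodule.span ℂ (Φ '' (D : Set (Fin m → K))) : Set ((Fin m → Fin n → F) → ℂ))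
      = {v : (Fin m → Fin n → F) → ℂ |
          ∀ (c : Fin m → ↥C) (d : Fin m → Fin n → F),
            (∀ Λ ∈ D, ∑ i : Fin m, κ (Λ i) (c i) = 0) →
            (∀ i : Fin m, ∀ y ∈ C, d i ⬝ᵥ y = 0) →
            ∀ x : Fin m → Fin n → F,
              omg p (Algebra.trace (ZMod p) F
                  (∑ i : Fin m, d i ⬝ᵥ (x i - (c i : Fin n → F))))
                * v (fun i => x i - (c i : Fin n → F)) = v x} := by
  set ψ : AddChar (ZMod p) ℂ := ZMod.stdAddChar
  set β : D →+ (Fin m → C) →+ ZMod p :=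
    (sumPairing (LinearMap.toAddMonoidHom'.comp κ.toAddMonoidHom)).comp D.subtype.toAddMonoidHom
  set E := Function.ExtendByZero.linearMap ℂ (Subtype.val ∘ · : (Fin m → C) → Fin m → Fin n → F)
  set a : ℂ := (((Real.sqrt ((p ^ r) ^ k))⁻¹ : ℝ) : ℂ)
  have ha : a ≠ 0 := by
    have hp : (0 : ℝ) < p := Nat.cast_pos.mpr (Fact.out : p.Prime).pos
    simpa [a] using (Real.sqrt_pos.mpr (pow_pos (pow_pos hp r) k)).ne'
  have hΦ_eq : ∀ Λ : D, Φ Λ = a ^ m • E fun c => ψ (β Λ c) := fun Λ => funext fun x => by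
    have hprod : (fun c => ∏ i, a * omg p (κ (Λ.1 i) (c i))) = a ^ m • fun c => ψ (β Λ c) :=
      funext fun c => by
        simp [Finset.prod_mul_distrib, omg_eq_stdAddChar, AddChar.map_sum_eq_prod, β, ψ]
    rw [hΦ, prod_dite_eq_extend (fun i c => a * omg p (κ (Λ.1 i) c)), hprod, ← map_smul]
    rfl
  have hspan : Submodule.span ℂ (Φ '' D)
      = (periodicSubmodule ℂ {c | ∀ Λ ∈ D, ∑ i, κ (Λ i) (c i) = 0}).map E := by
    simp only [Set.image_eq_range, hΦ_eq]
    rw [← Set.smul_set_range, Submodule.span_smul_eq_of_isUnit _ _ (ha.isUnit.pow m),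
      Set.range_comp', Submodule.span_image, span_range_pairing_eq_periodicSubmodule]
    congr 2
    ext t
    simp [β, ψ, ← ZMod.injective_stdAddChar.eq_iff' (AddChar.map_zero_eq_one _)]
  ext v
  rw [SetLike.mem_coe, hspan, Submodule.mem_map_extendByZero_iff Subtype.val_injective.comp_left,
    Set.mem_ofPred_eq, ← stabilizer_fixed_iff (ZMod.injective_stdAddChar (N := p)) (by simp)]
  simp only [omg_eq_stdAddChar]
  rfl

/-- `span{Φ_Λ : Λ ∈ D}` equals the joint fixed space of the operators
`X(c_1,…,c_m)Z(d_1,…,d_m)` with `(c_1,…,c_m) ∈ ⋂_{Λ∈D} ker F_Λ` and `d_i ∈ C^⊥`;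
in particular it is a stabilizer code. -/
theorem stmt_7 (p r n k m s : ℕ) [Fact p.Prime] (hr : 0 < r) (hk1 : 1 ≤ k) (hkn : k < n)
    (hs1 : 1 ≤ s) (hsm : s < m)
    (F K : Type) [Field F] [Fintype F] [Algebra (ZMod p) F] (hF : Fintype.card F = p ^ r)
    [Field K] [Fintype K] [Algebra (ZMod p) K] (hK : Fintype.card K = (p ^ r) ^ k)
    (C : Submodule F (Fin n → F)) (hC : Module.finrank F C = k)
    (κ : K ≃ₗ[ZMod p] (↥C →ₗ[ZMod p] ZMod p))
    (D : Submodule K (Fin m → K)) (hD : Module.finrank K ↥D = s)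
    (Φ : (Fin m → K) → (Fin m → Fin n → F) → ℂ)
    (hΦ : ∀ Λ x, Φ Λ x = ∏ i : Fin m,
      (if hx : x i ∈ C then (Real.sqrt ((p ^ r) ^ k))⁻¹ * omg p (κ (Λ i) ⟨x i, hx⟩) else 0)) :
    (Submodule.span ℂ (Φ '' (D : Set (Fin m → K))) : Set ((Fin m → Fin n → F) → ℂ))
      = {v : (Fin m → Fin n → F) → ℂ |
          ∀ (c : Fin m → ↥C) (d : Fin m → Fin n → F),
            (∀ Λ ∈ D, ∑ i : Fin m, κ (Λ i) (c i) = 0) →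
            (∀ i : Fin m, ∀ y ∈ C, d i ⬝ᵥ y = 0) →
            ∀ x : Fin m → Fin n → F,
              omg p (Algebra.trace (ZMod p) F
                  (∑ i : Fin m, d i ⬝ᵥ (x i - (c i : Fin n → F))))
                * v (fun i => x i - (c i : Fin n → F)) = v x} :=
  stmt_7_general p r n k m F K C κ D Φ hΦ
end

section
/- Let C ⊆ F_q^n be a k-dimensional F_q-linear code (1 ≤ k < n), let K be a finite field of characteristic p with q^k elements, let κ : K → Hom_{F_p}(C, F_p) be an F_p-linear isomorphism, write f_λ = κ(λ), and let D ⊆ K^m be an s-dimensional K-linear code (1 ≤ s < m). Let S̄ = {(c_1,…,c_m | d_1,…,d_m) ∈ F_q^{2nm} : (c_1,…,c_m) ∈ ⋂_{Λ∈D} ker(F_Λ), d_1,…,d_m ∈ C^⊥}. Then the trace-symplectic dual S̄^{⊥s} equals {(u_1,…,u_m | v_1,…,v_m) : u_1,…,u_m ∈ C and (v_1,…,v_m) ∈ D^Θ}. -/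
/-!
Both inclusions are double-orthogonality statements. Testing `(u | v)` against `(0 | d eᵢ)` with
`d ∈ C^⊥` shows that `Tr(d · uᵢ) = 0` for all `d ∈ C^⊥`; since `C^⊥` is an `F_q`-space and the
trace form is nondegenerate, this means `uᵢ ⊥ C^⊥`, so `uᵢ ∈ C`. Testing against `(c | 0)` shows
that the functional `c ↦ ∑ᵢ Tr(vᵢ · cᵢ)` on `C^m` vanishes on the common kernel of the `F_Λ`,
`Λ ∈ D`, so it is one of the `F_Λ`; that is exactly `v ∈ D^Θ`.
-/

open Matrix Module

section DotProduct

variable {ι F : Type*} [Fintype ι] [Field F]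

theorem Submodule.mem_of_forall_dotProduct_eq_zero {C : Submodule F (ι → F)} {x : ι → F}
    (h : ∀ d : ι → F, (∀ y ∈ C, d ⬝ᵥ y = 0) → d ⬝ᵥ x = 0) : x ∈ C := by
  classical
  rw [← Subspace.dualAnnihilator_dualCoannihilator_eq (W := C), Submodule.mem_dualCoannihilator]
  intro φ hφ
  rw [Submodule.mem_dualAnnihilator] at hφ
  obtain ⟨d, rfl⟩ := (dotProductEquiv F ι).surjective φ
  exact h d hφ

variable (k : Type*) [Field k] [Algebra k F]

noncomputable def Submodule.traceDotProduct (C : Submodule F (ι → F)) (v : ι → F) : Dual k C where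
  toFun c := Algebra.trace k F (v ⬝ᵥ c)
  map_add' a b := by simp [dotProduct_add]
  map_smul' a c := by simp [dotProduct_smul]

theorem Submodule.mem_of_forall_trace_dotProduct_eq_zero [FiniteDimensional k F]
    [Algebra.IsSeparable k F] {C : Submodule F (ι → F)} {x : ι → F}
    (h : ∀ d : ι → F, (∀ y ∈ C, d ⬝ᵥ y = 0) → Algebra.trace k F (d ⬝ᵥ x) = 0) : x ∈ C := by
  refine C.mem_of_forall_dotProduct_eq_zero fun d hd => ?_
  refine (traceForm_nondegenerate k F).1 _ fun a => ?_
  have had : ∀ y ∈ C, (a • d) ⬝ᵥ y = 0 := fun y hy => by rw [smul_dotProduct, hd y hy, smul_zero]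
  simpa [mul_comm a, smul_dotProduct] using h (a • d) had

end DotProduct

theorem Submodule.mem_of_forall_sum_apply_eq_zero {k V ι : Type*} [Field k] [AddCommGroup V]
    [Module k V] [FiniteDimensional k V] [Fintype ι] {E : Submodule k (ι → Dual k V)}
    {g : ι → Dual k V} (h : ∀ c : ι → V, (∀ f ∈ E, ∑ i, f i (c i) = 0) → ∑ i, g i (c i) = 0) :
    g ∈ E := by
  classical
  let Φ : (ι → Dual k V) ≃ₗ[k] Dual k (ι → V) := LinearMap.lsum k (fun _ : ι => V) k
  have hg : Φ g ∈ (E.map Φ.toLinearMap).dualCoannihilator.dualAnnihilator := by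
    rw [Submodule.mem_dualAnnihilator]
    intro c hc
    rw [Submodule.mem_dualCoannihilator] at hc
    simpa [Φ] using h c fun f hf => by simpa [Φ] using hc (Φ f) ⟨f, hf, rfl⟩
  rw [Subspace.dualCoannihilator_dualAnnihilator_eq] at hg
  obtain ⟨f, hf, hfg⟩ := hg
  rwa [← Φ.injective hfg]

theorem stmt_8_general (p n m : ℕ) [Fact p.Prime]
    (F K : Type) [Field F] [Fintype F] [Algebra (ZMod p) F]
    [Field K] [Algebra (ZMod p) K]
    (C : Submodule F (Fin n → F))
    (κ : K ≃ₗ[ZMod p] (↥C →ₗ[ZMod p] ZMod p))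
    (D : Submodule K (Fin m → K)) :
    {uv : (Fin m → Fin n → F) × (Fin m → Fin n → F) |
        ∀ cd : (Fin m → Fin n → F) × (Fin m → Fin n → F),
          ((∃ c : Fin m → ↥C, (∀ i, (c i : Fin n → F) = cd.1 i)
              ∧ ∀ Λ ∈ D, ∑ i : Fin m, κ (Λ i) (c i) = 0)
            ∧ (∀ i : Fin m, ∀ y ∈ C, cd.2 i ⬝ᵥ y = 0)) →
          Algebra.trace (ZMod p) F
            ((∑ i : Fin m, cd.2 i ⬝ᵥ uv.1 i) - ∑ i : Fin m, uv.2 i ⬝ᵥ cd.1 i) = 0}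
    = {uv : (Fin m → Fin n → F) × (Fin m → Fin n → F) |
        (∀ i : Fin m, uv.1 i ∈ C)
        ∧ ∃ Λ ∈ D, ∀ (i : Fin m) (c : ↥C),
            Algebra.trace (ZMod p) F (uv.2 i ⬝ᵥ (c : Fin n → F)) = κ (Λ i) c} := by
  ext ⟨u, v⟩
  simp only [Set.mem_ofPred_eq]
  constructor
  · intro H
    refine ⟨fun i => C.mem_of_forall_trace_dotProduct_eq_zero (ZMod p) fun d hd => ?_, ?_⟩
    · have hsingle (j : Fin m) (y) (hy : y ∈ C) : (Pi.single i d : Fin m → Fin n → F) j ⬝ᵥ y = 0 := by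
        rcases eq_or_ne j i with rfl | hji
        · simpa using hd y hy
        · simp [hji]
      have hsum : ∑ j, (Pi.single i d : Fin m → Fin n → F) j ⬝ᵥ u j = d ⬝ᵥ u i := by
        rw [Fintype.sum_eq_single i fun j hj => by simp [hj], Pi.single_eq_same]
      simpa only [hsum, Pi.zero_apply, dotProduct_zero, Finset.sum_const_zero, sub_zero] using
        H (0, Pi.single i d) ⟨⟨0, fun _ => rfl, by simp⟩, hsingle⟩
    · obtain ⟨Λ, hΛ, hΛv⟩ : (fun i => C.traceDotProduct (ZMod p) (v i)) ∈
          (D.restrictScalars (ZMod p)).map (LinearEquiv.piCongrRight fun _ => κ).toLinearMap :=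
        Submodule.mem_of_forall_sum_apply_eq_zero fun c hc => by
          simpa [Submodule.traceDotProduct] using
            H (fun i => c i, 0) ⟨⟨c, fun _ => rfl, fun Λ hΛ => hc _ ⟨Λ, hΛ, rfl⟩⟩, by simp⟩
      exact ⟨Λ, hΛ, fun i c => (LinearMap.congr_fun (congr_fun hΛv i) c).symm⟩
  · rintro ⟨hu, Λ, hΛ, hv⟩ ⟨_, d⟩ ⟨⟨c, hc, hcD⟩, hd⟩
    obtain rfl := funext hc
    simp [hd _ _ (hu _), hv, hcD Λ hΛ]

/-- the trace-symplectic dual of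
`S̄ = {(c|d) : c ∈ ⋂_{Λ∈D} ker F_Λ, d_i ∈ C^⊥}` equals
`{(u|v) : u_i ∈ C, v ∈ D^Θ}`. -/
theorem stmt_8 (p r n k m s : ℕ) [Fact p.Prime] (hr : 0 < r) (hk1 : 1 ≤ k) (hkn : k < n)
    (hs1 : 1 ≤ s) (hsm : s < m)
    (F K : Type) [Field F] [Fintype F] [Algebra (ZMod p) F] (hF : Fintype.card F = p ^ r)
    [Field K] [Fintype K] [Algebra (ZMod p) K] (hK : Fintype.card K = (p ^ r) ^ k)
    (C : Submodule F (Fin n → F)) (hC : Module.finrank F C = k)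
    (κ : K ≃ₗ[ZMod p] (↥C →ₗ[ZMod p] ZMod p))
    (D : Submodule K (Fin m → K)) (hD : Module.finrank K ↥D = s) :
    {uv : (Fin m → Fin n → F) × (Fin m → Fin n → F) |
        ∀ cd : (Fin m → Fin n → F) × (Fin m → Fin n → F),
          ((∃ c : Fin m → ↥C, (∀ i, (c i : Fin n → F) = cd.1 i)
              ∧ ∀ Λ ∈ D, ∑ i : Fin m, κ (Λ i) (c i) = 0)
            ∧ (∀ i : Fin m, ∀ y ∈ C, cd.2 i ⬝ᵥ y = 0)) →
          Algebra.trace (ZMod p) F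
            ((∑ i : Fin m, cd.2 i ⬝ᵥ uv.1 i) - ∑ i : Fin m, uv.2 i ⬝ᵥ cd.1 i) = 0}
    = {uv : (Fin m → Fin n → F) × (Fin m → Fin n → F) |
        (∀ i : Fin m, uv.1 i ∈ C)
        ∧ ∃ Λ ∈ D, ∀ (i : Fin m) (c : ↥C),
            Algebra.trace (ZMod p) F (uv.2 i ⬝ᵥ (c : Fin n → F)) = κ (Λ i) c} :=
  stmt_8_general p n m F K C κ D
end

section
/- Let C ⊆ F_q^n be a k-dimensional F_q-linear code, let K be a finite field of characteristic p with q^k elements, let κ : K → Hom_{F_p}(C, F_p) be an F_p-linear isomorphism, write f_λ = κ(λ), and let D ⊆ K^m be an s-dimensional K-linear code. Then D^Θ = {(z_1,…,z_m) ∈ (F_q^n)^m : Σ_{i=1}^m Tr_{q/p}(z_i·c_i) = 0 for all (c_1,…,c_m) ∈ ⋂_{Λ∈D} ker(F_Λ)}. -/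
open Matrix

attribute [local instance] Classical.propDecidable

set_option maxHeartbeats 1000000 in
/-- `D^Θ` equals the set of `(z_1,…,z_m)` with
`Σ_i Tr(z_i·c_i) = 0` for every `(c_1,…,c_m) ∈ ⋂_{Λ∈D} ker F_Λ`. -/
theorem stmt_9 (p r n k m s : ℕ) [Fact p.Prime] (hr : 0 < r)
    (F K : Type) [Field F] [Fintype F] [Algebra (ZMod p) F] (hF : Fintype.card F = p ^ r)
    [Field K] [Fintype K] [Algebra (ZMod p) K] (hK : Fintype.card K = (p ^ r) ^ k)
    (C : Submodule F (Fin n → F)) (hC : Module.finrank F C = k)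
    (κ : K ≃ₗ[ZMod p] (↥C →ₗ[ZMod p] ZMod p))
    (D : Submodule K (Fin m → K)) (hD : Module.finrank K ↥D = s) :
    {z : Fin m → Fin n → F | ∃ Λ ∈ D, ∀ (i : Fin m) (c : ↥C),
        Algebra.trace (ZMod p) F (z i ⬝ᵥ (c : Fin n → F)) = κ (Λ i) c}
    = {z : Fin m → Fin n → F | ∀ c : Fin m → ↥C,
        (∀ Λ ∈ D, ∑ i : Fin m, κ (Λ i) (c i) = 0) →
        ∑ i : Fin m, Algebra.trace (ZMod p) F (z i ⬝ᵥ (c i : Fin n → F)) = 0} := by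
  classical
  -- the pairing map
  have hΦadd : ∀ Λ Λ' : Fin m → K,
      (∑ i, (κ ((Λ + Λ') i)).comp (LinearMap.proj (R := ZMod p) (φ := fun _ : Fin m => ↥C) i))
      = (∑ i, (κ (Λ i)).comp (LinearMap.proj i)) + ∑ i, (κ (Λ' i)).comp (LinearMap.proj i) := by
    intro Λ Λ'
    rw [← Finset.sum_add_distrib]
    refine Finset.sum_congr rfl fun i _ => ?_
    simp [map_add, LinearMap.add_comp]
  set Φ : (Fin m → K) →ₗ[ZMod p] ((Fin m → ↥C) →ₗ[ZMod p] ZMod p) :=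
    { toFun := fun Λ => ∑ i, (κ (Λ i)).comp (LinearMap.proj i)
      map_add' := hΦadd
      map_smul' := by
        intro a Λ
        simp only [RingHom.id_apply, Finset.smul_sum]
        refine Finset.sum_congr rfl fun i _ => ?_
        rw [Pi.smul_apply, κ.map_smul, LinearMap.smul_comp] } with hΦ
  have Φapply : ∀ Λ c, Φ Λ c = ∑ i, κ (Λ i) (c i) := by
    intro Λ c
    simp only [hΦ, LinearMap.coe_mk, AddHom.coe_mk, LinearMap.coe_sum, Finset.sum_apply,
      LinearMap.comp_apply, LinearMap.proj_apply]
  have Φinj : Function.Injective Φ := by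
    rw [injective_iff_map_eq_zero]
    intro Λ h
    funext i
    have : κ (Λ i) = 0 := by
      ext x
      have h0 := congrFun (congrArg DFunLike.coe h) (Pi.single i x : Fin m → ↥C)
      rw [Φapply] at h0
      have h2 : ∑ j, κ (Λ j) ((Pi.single i x : Fin m → ↥C) j) = κ (Λ i) x := by
        rw [Finset.sum_eq_single i]
        · simp
        · intro j _ hj; simp [Pi.single_apply, hj]
        · simp
      rw [h2] at h0
      simpa using h0
    simpa using κ.injective (by simpa using this)
  ext z
  simp only [Set.mem_setOf_eq]
  constructor
  · rintro ⟨Λ, hΛ, hz⟩ c hc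
    simp only [hz]
    exact hc Λ hΛ
  · intro hz
    set g : Fin m → (↥C →ₗ[ZMod p] ZMod p) := fun i =>
      { toFun := fun c => Algebra.trace (ZMod p) F (z i ⬝ᵥ (c : Fin n → F))
        map_add' := by intro c c'; simp [dotProduct_add]
        map_smul' := by
          intro a c
          show Algebra.trace (ZMod p) F (z i ⬝ᵥ ((a • c : ↥C) : Fin n → F)) = _
          have h1 : ((a • c : ↥C) : Fin n → F) = a • (c : Fin n → F) :=
            Submodule.coe_smul_of_tower a c
          have h2 : z i ⬝ᵥ (a • (c : Fin n → F)) = a • (z i ⬝ᵥ (c : Fin n → F)) := by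
            simp only [dotProduct, Algebra.smul_def, Finset.mul_sum, Pi.smul_apply]
            exact Finset.sum_congr rfl fun j _ => by ring
          rw [h1, h2, _root_.map_smul]
          simp } with hg
    set Λ : Fin m → K := fun i => κ.symm (g i) with hΛdef
    have hzΛ : ∀ i (c : ↥C), Algebra.trace (ZMod p) F (z i ⬝ᵥ (c : Fin n → F)) = κ (Λ i) c := by
      intro i c
      simp [hΛdef, hg]
    refine ⟨Λ, ?_, hzΛ⟩
    -- membership in D via double annihilator
    set D' : Submodule (ZMod p) (Fin m → K) := D.restrictScalars (ZMod p) with hD'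
    set W : Submodule (ZMod p) ((Fin m → ↥C) →ₗ[ZMod p] ZMod p) := D'.map Φ with hW
    haveI : Finite ((Fin m → ↥C) →ₗ[ZMod p] ZMod p) :=
      Finite.of_injective _ (DFunLike.coe_injective (F := (Fin m → ↥C) →ₗ[ZMod p] ZMod p))
    haveI hfin : FiniteDimensional (ZMod p) ↥W := Module.Finite.of_finite
    have key : Φ Λ ∈ W := by
      rw [← Subspace.dualCoannihilator_dualAnnihilator_eq (W := W)]
      rw [Submodule.mem_dualAnnihilator]
      intro c hc
      rw [Submodule.mem_dualCoannihilator] at hc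
      have hc' : ∀ Λ' ∈ D, ∑ i, κ (Λ' i) (c i) = 0 := by
        intro Λ' hΛ'
        have := hc (Φ Λ') ⟨Λ', hΛ', rfl⟩
        rwa [Φapply] at this
      have := hz c hc'
      rw [Φapply]
      simp only [← hzΛ]
      exact this
    obtain ⟨Λ', hΛ', hΛ'eq⟩ := key
    have := Φinj hΛ'eq
    rw [← this]
    exact hΛ'
end

section
/- Let C ⊆ F_q^n be a k-dimensional F_q-linear code (1 ≤ k < n), let K be a finite field of characteristic p with q^k elements, let κ : K → Hom_{F_p}(C,F_p) be an F_p-linear isomorphism, write f_λ = κ(λ), and let D ⊆ K^m be an s-dimensional K-linear code (1 ≤ s < m) such that for every 1 ≤ i ≤ m there exists Λ ∈ D whose i-th coordinate equals 1. Let S̄ = {(c_1,…,c_m | d_1,…,d_m) : (c_1,…,c_m) ∈ ⋂_{Λ∈D} ker(F_Λ), d_i ∈ C^⊥} ⊆ F_q^{2nm}. Then min{swt(w) : w ∈ S̄^{⊥s} ∖ S̄} = min{d(C), ℓ}, where ℓ = min{wt(X) : X ∈ D^Θ ∖ (C^⊥)^m}. -/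
/-!
Since the trace form of `F_q / F_p` is nondegenerate, the `F_p`-functionals on `F_q^n` are exactly
`x ↦ Tr(z · x)`. Testing `(u | v)` against the elements `(0 | d e_i)` and `(c | 0)` of `S̄` then
computes the symplectic dual: `(u | v) ∈ S̄^{⊥s}` iff every `u_i` lies in `C` and `v ∈ D^Θ`, the
latter because a functional on `C^m` that vanishes on `⋂_{Λ ∈ D} ker F_Λ` is itself some `F_Λ`.

An element of `S̄^{⊥s} ∖ S̄` therefore either has `v ∉ (C^⊥)^m`, so its weight is at least
`wt(v) ≥ ℓ`, or has `v ∈ (C^⊥)^m` and some `u_i ≠ 0`, so its weight is at least `d(C)`. Both bounds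
are attained: by `(0 | X)` for `X ∈ D^Θ ∖ (C^⊥)^m`, and by `(c e_i | 0)` for a minimum-weight
`c ∈ C`, which leaves `S̄` because some `Λ ∈ D` has `Λ_i = 1`, so that `F_{λΛ}(c e_i) = f_λ(c)`
can be made nonzero.
-/

open Matrix Module

attribute [local instance] Classical.propDecidable

section LinearCode

variable {F : Type*} [Field F] {n : ℕ}

def dualCode (C : Submodule F (Fin n → F)) : Set (Fin n → F) :=
  {d | ∀ y ∈ C, d ⬝ᵥ y = 0}

noncomputable def minDistance (C : Submodule F (Fin n → F)) : ℕ :=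
  sInf {w | ∃ c ∈ C, c ≠ 0 ∧ w = hammingNorm c}

end LinearCode

noncomputable def traceDotForm (p : ℕ) (F : Type*) [Field F] [Algebra (ZMod p) F] (n : ℕ) :
    LinearMap.BilinForm (ZMod p) (Fin n → F) :=
  (dotProductBilin (ZMod p) (ZMod p)).compr₂ (Algebra.trace (ZMod p) F)

@[simp]
lemma traceDotForm_apply {p : ℕ} {F : Type*} [Field F] [Algebra (ZMod p) F] {n : ℕ}
    (z x : Fin n → F) : traceDotForm p F n z x = Algebra.trace (ZMod p) F (z ⬝ᵥ x) := rfl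

section TraceDuality

variable (p : ℕ) [Fact p.Prime] {F : Type*} [Field F] [Fintype F] [Algebra (ZMod p) F] {n : ℕ}

lemma eq_zero_of_forall_trace_mul_eq_zero {a : F}
    (h : ∀ b : F, Algebra.trace (ZMod p) F (a * b) = 0) : a = 0 :=
  have : FiniteDimensional (ZMod p) F := .of_finite
  (traceForm_nondegenerate (ZMod p) F).1 a h

lemma traceDotForm_surjective : Function.Surjective (traceDotForm p F n) := by
  have : FiniteDimensional (ZMod p) F := .of_finite
  refine (LinearMap.injective_iff_surjective_of_finrank_eq_finrank
    Subspace.dual_finrank_eq.symm).mp ?_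
  rw [← LinearMap.ker_eq_bot, LinearMap.ker_eq_bot']
  intro z hz
  funext j
  refine eq_zero_of_forall_trace_mul_eq_zero p fun b => ?_
  simpa using LinearMap.congr_fun hz (Pi.single j b)

variable (C : Submodule F (Fin n → F))

lemma exists_trace_dotProduct_eq (ψ : Dual (ZMod p) C) :
    ∃ z : Fin n → F, ∀ c : C, Algebra.trace (ZMod p) F (z ⬝ᵥ c) = ψ c := by
  obtain ⟨φ, rfl⟩ := LinearMap.dualMap_surjective_of_injective
    (f := C.subtype.restrictScalars (ZMod p)) Subtype.val_injective ψ
  obtain ⟨z, rfl⟩ := traceDotForm_surjective p φ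
  exact ⟨z, fun c => rfl⟩

lemma mem_dualCode_of_forall_trace_eq_zero {z : Fin n → F}
    (hz : ∀ c ∈ C, Algebra.trace (ZMod p) F (z ⬝ᵥ c) = 0) : z ∈ dualCode C := fun c hc =>
  eq_zero_of_forall_trace_mul_eq_zero p fun b => by
    simpa [dotProduct_smul, mul_comm] using hz (b • c) (C.smul_mem b hc)

lemma mem_of_forall_trace_dotProduct_eq_zero {u : Fin n → F}
    (hu : ∀ d ∈ dualCode C, Algebra.trace (ZMod p) F (d ⬝ᵥ u) = 0) : u ∈ C := by
  rw [← C.restrictScalars_mem (ZMod p),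
    ← Subspace.dualAnnihilator_dualCoannihilator_eq (W := C.restrictScalars (ZMod p)),
    Submodule.mem_dualCoannihilator]
  intro φ hφ
  obtain ⟨z, rfl⟩ := traceDotForm_surjective p φ
  refine hu z (mem_dualCode_of_forall_trace_eq_zero p C fun c hc => ?_)
  exact (Submodule.mem_dualAnnihilator _).mp hφ c hc

end TraceDuality

lemma exists_forall_apply_eq_of_ker_le {k V W : Type*} [Field k] [AddCommGroup V] [Module k V]
    [AddCommGroup W] [Module k W] [FiniteDimensional k W] (α : V →ₗ[k] Dual k W) (g : Dual k V)
    (h : LinearMap.ker α ≤ LinearMap.ker g) : ∃ w : W, ∀ v, g v = α v w := by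
  obtain ⟨φ, rfl⟩ : g ∈ LinearMap.range α.dualMap := by
    rw [LinearMap.range_dualMap_eq_dualAnnihilator_ker, Submodule.mem_dualAnnihilator]
    exact fun v hv => h hv
  obtain ⟨w, rfl⟩ := (evalEquiv k W).surjective φ
  exact ⟨w, fun v => rfl⟩

lemma Nat.sInf_eq_min_of_subset {A B L : Set ℕ} (hB : B.Nonempty) (hL : L.Nonempty)
    (hBA : B ⊆ A) (hLA : L ⊆ A) (hA : ∀ a ∈ A, min (sInf B) (sInf L) ≤ a) :
    sInf A = min (sInf B) (sInf L) :=
  le_antisymm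
    (le_min (Nat.sInf_le (hBA (Nat.sInf_mem hB))) (Nat.sInf_le (hLA (Nat.sInf_mem hL))))
    (le_csInf (hB.mono hBA) hA)

section SymplecticWeight

variable {γ : Type*} [Zero γ] {m n : ℕ}

noncomputable def symplecticWeight (x : (Fin m → Fin n → γ) × (Fin m → Fin n → γ)) : ℕ :=
  (Finset.univ.filter fun ij : Fin m × Fin n => x.1 ij.1 ij.2 ≠ 0 ∨ x.2 ij.1 ij.2 ≠ 0).card

lemma card_filter_ne_zero_eq_sum_hammingNorm (z : Fin m → Fin n → γ) :
    (Finset.univ.filter fun ij : Fin m × Fin n => z ij.1 ij.2 ≠ 0).card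
      = ∑ i, hammingNorm (z i) := by
  rw [Finset.card_filter, Fintype.sum_prod_type]
  simp only [hammingNorm, Finset.card_filter]

lemma symplecticWeight_zero_left (v : Fin m → Fin n → γ) :
    symplecticWeight (0, v) = ∑ i, hammingNorm (v i) := by
  simp [symplecticWeight, ← card_filter_ne_zero_eq_sum_hammingNorm]

lemma symplecticWeight_zero_right (u : Fin m → Fin n → γ) :
    symplecticWeight (u, 0) = ∑ i, hammingNorm (u i) := by
  simp [symplecticWeight, ← card_filter_ne_zero_eq_sum_hammingNorm]

lemma symplecticWeight_single_zero (i : Fin m) (c : Fin n → γ) :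
    symplecticWeight (Pi.single i c, 0) = hammingNorm c := by
  rw [symplecticWeight_zero_right, Fintype.sum_eq_single i fun j hj => by
    simp [Pi.single_eq_of_ne hj], Pi.single_eq_same]

lemma hammingNorm_fst_le_symplecticWeight (x : (Fin m → Fin n → γ) × (Fin m → Fin n → γ))
    (i : Fin m) : hammingNorm (x.1 i) ≤ symplecticWeight x := by
  refine le_trans ?_ (Finset.card_le_card (Finset.monotone_filter_right _ fun _ _ => Or.inl))
  rw [card_filter_ne_zero_eq_sum_hammingNorm]
  exact Finset.single_le_sum (f := fun j => hammingNorm (x.1 j)) (fun _ _ => Nat.zero_le _)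
    (Finset.mem_univ i)

lemma sum_hammingNorm_snd_le_symplecticWeight (x : (Fin m → Fin n → γ) × (Fin m → Fin n → γ)) :
    ∑ i, hammingNorm (x.2 i) ≤ symplecticWeight x := by
  rw [← card_filter_ne_zero_eq_sum_hammingNorm]
  exact Finset.card_le_card (Finset.monotone_filter_right _ fun _ _ => Or.inr)

end SymplecticWeight

section QuantumCode

variable (p : ℕ) {F K : Type*} [Field F] [Algebra (ZMod p) F] [Field K] [Algebra (ZMod p) K]
  {n m : ℕ} (C : Submodule F (Fin n → F)) (κ : K ≃ₗ[ZMod p] Dual (ZMod p) C)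
  (D : Submodule K (Fin m → K))

/-- `kappaPairing c Λ` is the paper's `F_Λ(c)`. -/
noncomputable def kappaPairing : (Fin m → C) →ₗ[ZMod p] Dual (ZMod p) D :=
  LinearMap.mk₂ (ZMod p) (fun c Λ => ∑ i, κ ((Λ : Fin m → K) i) (c i))
    (fun c c' Λ => by simp [Finset.sum_add_distrib])
    (fun a c Λ => by simp [Finset.mul_sum])
    (fun c Λ Λ' => by simp [Finset.sum_add_distrib])
    (fun a c Λ => by simp [Finset.mul_sum])

variable {p} in
def sBar : Set ((Fin m → Fin n → F) × (Fin m → Fin n → F)) :=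
  {x | (∃ c : Fin m → C, (∀ i, (c i : Fin n → F) = x.1 i) ∧ ∀ Λ ∈ D, ∑ i, κ (Λ i) (c i) = 0)
    ∧ ∀ i, x.2 i ∈ dualCode C}

def thetaCode : Set (Fin m → Fin n → F) :=
  {z | ∃ Λ ∈ D, ∀ i (c : C), Algebra.trace (ZMod p) F (z i ⬝ᵥ c) = κ (Λ i) c}

noncomputable def thetaDistance : ℕ :=
  sInf {w | ∃ z ∈ thetaCode p C κ D, (¬ ∀ i, z i ∈ dualCode C) ∧ w = ∑ i, hammingNorm (z i)}

noncomputable def traceSymplectic (x y : (Fin m → Fin n → F) × (Fin m → Fin n → F)) : ZMod p :=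
  Algebra.trace (ZMod p) F ((∑ i, x.2 i ⬝ᵥ y.1 i) - ∑ i, y.2 i ⬝ᵥ x.1 i)

variable {p C κ D}

lemma kappaPairing_apply (c : Fin m → C) (Λ : D) :
    kappaPairing p C κ D c Λ = ∑ i, κ ((Λ : Fin m → K) i) (c i) := rfl

lemma kappaPairing_single (i : Fin m) (c : C) (Λ : D) :
    kappaPairing p C κ D (Pi.single i c) Λ = κ ((Λ : Fin m → K) i) c := by
  simp [kappaPairing_apply, Pi.single_apply, apply_ite]

lemma kappaPairing_eq_zero_iff (c : Fin m → C) :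
    kappaPairing p C κ D c = 0 ↔ ∀ Λ ∈ D, ∑ i, κ (Λ i) (c i) = 0 := by
  simp [LinearMap.ext_iff, kappaPairing_apply]

lemma traceSymplectic_eq_zero {x y : (Fin m → Fin n → F) × (Fin m → Fin n → F)}
    (hx : x ∈ sBar C κ D) (hy₁ : ∀ i, y.1 i ∈ C) (hy₂ : y.2 ∈ thetaCode p C κ D) :
    traceSymplectic p x y = 0 := by
  obtain ⟨⟨c, hcx, hc⟩, hx₂⟩ := hx
  obtain ⟨Λ, hΛ, hy₂⟩ := hy₂
  have h₁ : ∑ i, x.2 i ⬝ᵥ y.1 i = 0 := Finset.sum_eq_zero fun i _ => hx₂ i _ (hy₁ i)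
  have h₂ : Algebra.trace (ZMod p) F (∑ i, y.2 i ⬝ᵥ x.1 i) = ∑ i, κ (Λ i) (c i) := by
    simp only [map_sum, ← hcx, hy₂]
  rw [traceSymplectic, h₁, zero_sub, map_neg, h₂, hc Λ hΛ, neg_zero]

variable [Fact p.Prime]

lemma single_notMem_sBar {i : Fin m} {Λ₀ : Fin m → K} (hΛ₀ : Λ₀ ∈ D) (hΛ₀i : Λ₀ i = 1)
    {c₀ : Fin n → F} (hc₀ : c₀ ∈ C) (hc₀0 : c₀ ≠ 0) (v : Fin m → Fin n → F) :
    (Pi.single i c₀, v) ∉ sBar C κ D := by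
  rintro ⟨⟨c, hc, hker⟩, -⟩
  have hci : c = Pi.single i ⟨c₀, hc₀⟩ := by
    funext j
    apply Subtype.ext
    rcases eq_or_ne j i with rfl | hji
    · simpa using hc j
    · simpa [Pi.single_eq_of_ne hji] using hc j
  obtain ⟨φ, hφ⟩ := Projective.exists_dual_ne_zero (ZMod p) (x := (⟨c₀, hc₀⟩ : C))
    (by simpa using hc₀0)
  have h := LinearMap.congr_fun ((kappaPairing_eq_zero_iff c).mpr hker)
    ⟨κ.symm φ • Λ₀, D.smul_mem _ hΛ₀⟩
  simp [hci, kappaPairing_single, hΛ₀i] at h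
  exact hφ h

lemma snd_mem_thetaCode_of_forall_traceSymplectic_eq_zero [Fintype K]
    {y : (Fin m → Fin n → F) × (Fin m → Fin n → F)}
    (hy : ∀ x ∈ sBar C κ D, traceSymplectic p x y = 0) : y.2 ∈ thetaCode p C κ D := by
  have : FiniteDimensional (ZMod p) D := .of_finite
  let g : Dual (ZMod p) (Fin m → C) := ∑ i, (traceDotForm p F n (y.2 i)).comp
    ((C.subtype.restrictScalars (ZMod p)).comp (LinearMap.proj i))
  obtain ⟨Λ, hΛ⟩ := exists_forall_apply_eq_of_ker_le (kappaPairing p C κ D) g fun c hc => by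
    have hx : ((fun i => (c i : Fin n → F)), 0) ∈ sBar C κ D :=
      ⟨⟨c, fun _ => rfl, (kappaPairing_eq_zero_iff c).mp hc⟩, fun i y _ => zero_dotProduct y⟩
    simpa [traceSymplectic, g] using hy _ hx
  refine ⟨Λ, Λ.2, fun i c => ?_⟩
  simpa [g, kappaPairing_single, Pi.single_apply, apply_ite] using hΛ (Pi.single i c)

variable [Fintype F]

lemma fst_mem_of_forall_traceSymplectic_eq_zero {y : (Fin m → Fin n → F) × (Fin m → Fin n → F)}
    (hy : ∀ x ∈ sBar C κ D, traceSymplectic p x y = 0) (i : Fin m) : y.1 i ∈ C := by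
  refine mem_of_forall_trace_dotProduct_eq_zero p C fun d hd => ?_
  have hx : ((0 : Fin m → Fin n → F), (Pi.single i d : Fin m → Fin n → F)) ∈ sBar C κ D := by
    refine ⟨⟨0, fun _ => rfl, fun Λ _ => by simp⟩, fun j => ?_⟩
    rcases eq_or_ne j i with rfl | hji
    · simpa using hd
    · simp [Pi.single_eq_of_ne hji, dualCode]
  have h := hy _ hx
  rw [traceSymplectic, Fintype.sum_eq_single i fun j hj => by simp [Pi.single_eq_of_ne hj]] at h
  simpa using h

lemma min_le_symplecticWeight [Fintype K] {y : (Fin m → Fin n → F) × (Fin m → Fin n → F)}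
    (hy : ∀ x ∈ sBar C κ D, traceSymplectic p x y = 0) (hyS : y ∉ sBar C κ D) :
    min (minDistance C) (thetaDistance p C κ D) ≤ symplecticWeight y := by
  by_cases hy₂ : ∀ i, y.2 i ∈ dualCode C
  · obtain ⟨i, hi⟩ : ∃ i, y.1 i ≠ 0 := by
      by_contra! h
      exact hyS ⟨⟨0, fun i => (h i).symm, fun Λ _ => by simp⟩, hy₂⟩
    refine (min_le_left _ _).trans <|
      (Nat.sInf_le ?_).trans (hammingNorm_fst_le_symplecticWeight y i)
    exact ⟨_, fst_mem_of_forall_traceSymplectic_eq_zero hy i, hi, rfl⟩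
  · refine (min_le_right _ _).trans <|
      (Nat.sInf_le ?_).trans (sum_hammingNorm_snd_le_symplecticWeight y)
    exact ⟨_, snd_mem_thetaCode_of_forall_traceSymplectic_eq_zero hy, hy₂, rfl⟩

theorem sInf_symplecticWeight_eq_min [Fintype K] (hm : 0 < m) (hD : ∀ i, ∃ Λ ∈ D, Λ i = 1) :
    sInf {w | ∃ y, (∀ x ∈ sBar C κ D, traceSymplectic p x y = 0) ∧ y ∉ sBar C κ D
        ∧ w = symplecticWeight y}
      = min (minDistance C) (thetaDistance p C κ D) := by
  let i₀ : Fin m := ⟨0, hm⟩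
  obtain ⟨Λ₀, hΛ₀, hΛ₀i⟩ := hD i₀
  obtain ⟨c₁, hc₁⟩ : ∃ c : C, κ 1 c ≠ 0 :=
    DFunLike.ne_iff.mp (κ.map_ne_zero_iff.mpr one_ne_zero)
  refine Nat.sInf_eq_min_of_subset ?_ ?_ ?_ ?_ fun _ ⟨y, hy, hyS, hw⟩ =>
    hw ▸ min_le_symplecticWeight hy hyS
  · refine ⟨_, c₁, c₁.2, fun h => hc₁ ?_, rfl⟩
    rw [show c₁ = 0 from Subtype.ext h, map_zero]
  · choose z hz using fun i => exists_trace_dotProduct_eq p C (κ (Λ₀ i))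
    refine ⟨_, z, ⟨Λ₀, hΛ₀, hz⟩, fun h => hc₁ ?_, rfl⟩
    rw [← hΛ₀i, ← hz, h i₀ c₁ c₁.2, map_zero]
  · rintro _ ⟨c, hc, hc0, rfl⟩
    refine ⟨(Pi.single i₀ c, 0), fun x hx => traceSymplectic_eq_zero hx (fun j => ?_)
      ⟨0, D.zero_mem, by simp⟩, single_notMem_sBar hΛ₀ hΛ₀i hc hc0 0,
      (symplecticWeight_single_zero i₀ c).symm⟩
    rcases eq_or_ne j i₀ with rfl | hj
    · simpa using hc
    · simp [Pi.single_eq_of_ne hj, C.zero_mem]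
  · rintro _ ⟨z, hz, hzC, rfl⟩
    exact ⟨(0, z), fun x hx => traceSymplectic_eq_zero hx (fun _ => C.zero_mem) hz,
      fun h => hzC h.2, (symplecticWeight_zero_left z).symm⟩

end QuantumCode

theorem stmt_10_general (p n m s : ℕ) [Fact p.Prime] (hsm : s < m)
    (F K : Type) [Field F] [Fintype F] [Algebra (ZMod p) F]
    [Field K] [Fintype K] [Algebra (ZMod p) K]
    (C : Submodule F (Fin n → F))
    (κ : K ≃ₗ[ZMod p] (↥C →ₗ[ZMod p] ZMod p))
    (D : Submodule K (Fin m → K))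
    (hDcoord : ∀ i : Fin m, ∃ Λ ∈ D, Λ i = 1) :
    sInf {w : ℕ | ∃ uv : (Fin m → Fin n → F) × (Fin m → Fin n → F),
        (∀ cd : (Fin m → Fin n → F) × (Fin m → Fin n → F),
          ((∃ c : Fin m → ↥C, (∀ i, (c i : Fin n → F) = cd.1 i)
              ∧ ∀ Λ ∈ D, ∑ i : Fin m, κ (Λ i) (c i) = 0)
            ∧ (∀ i : Fin m, ∀ y ∈ C, cd.2 i ⬝ᵥ y = 0)) →
          Algebra.trace (ZMod p) F
            ((∑ i : Fin m, cd.2 i ⬝ᵥ uv.1 i) - ∑ i : Fin m, uv.2 i ⬝ᵥ cd.1 i) = 0)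
        ∧ ¬((∃ c : Fin m → ↥C, (∀ i, (c i : Fin n → F) = uv.1 i)
              ∧ ∀ Λ ∈ D, ∑ i : Fin m, κ (Λ i) (c i) = 0)
            ∧ (∀ i : Fin m, ∀ y ∈ C, uv.2 i ⬝ᵥ y = 0))
        ∧ w = (Finset.univ.filter
            (fun ij : Fin m × Fin n => uv.1 ij.1 ij.2 ≠ 0 ∨ uv.2 ij.1 ij.2 ≠ 0)).card}
    = min
        (sInf {w : ℕ | ∃ c ∈ C, c ≠ 0 ∧ w = hammingNorm c})
        (sInf {w : ℕ | ∃ z : Fin m → Fin n → F,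
            (∃ Λ ∈ D, ∀ (i : Fin m) (c : ↥C),
              Algebra.trace (ZMod p) F (z i ⬝ᵥ (c : Fin n → F)) = κ (Λ i) c)
            ∧ ¬(∀ i : Fin m, ∀ y ∈ C, z i ⬝ᵥ y = 0)
            ∧ w = ∑ i : Fin m, hammingNorm (z i)}) :=
  sInf_symplecticWeight_eq_min (by omega) hDcoord

/-- the minimum symplectic weight over `S̄^{⊥s} ∖ S̄` equals
`min{d(C), ℓ}` where `ℓ = min{wt(X) : X ∈ D^Θ ∖ (C^⊥)^m}`. -/
theorem stmt_10 (p r n k m s : ℕ) [Fact p.Prime] (hr : 0 < r) (hk1 : 1 ≤ k) (hkn : k < n)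
    (hs1 : 1 ≤ s) (hsm : s < m)
    (F K : Type) [Field F] [Fintype F] [Algebra (ZMod p) F] (hF : Fintype.card F = p ^ r)
    [Field K] [Fintype K] [Algebra (ZMod p) K] (hK : Fintype.card K = (p ^ r) ^ k)
    (C : Submodule F (Fin n → F)) (hC : Module.finrank F C = k)
    (κ : K ≃ₗ[ZMod p] (↥C →ₗ[ZMod p] ZMod p))
    (D : Submodule K (Fin m → K)) (hD : Module.finrank K ↥D = s)
    (hDcoord : ∀ i : Fin m, ∃ Λ ∈ D, Λ i = 1) :
    sInf {w : ℕ | ∃ uv : (Fin m → Fin n → F) × (Fin m → Fin n → F),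
        (∀ cd : (Fin m → Fin n → F) × (Fin m → Fin n → F),
          ((∃ c : Fin m → ↥C, (∀ i, (c i : Fin n → F) = cd.1 i)
              ∧ ∀ Λ ∈ D, ∑ i : Fin m, κ (Λ i) (c i) = 0)
            ∧ (∀ i : Fin m, ∀ y ∈ C, cd.2 i ⬝ᵥ y = 0)) →
          Algebra.trace (ZMod p) F
            ((∑ i : Fin m, cd.2 i ⬝ᵥ uv.1 i) - ∑ i : Fin m, uv.2 i ⬝ᵥ cd.1 i) = 0)
        ∧ ¬((∃ c : Fin m → ↥C, (∀ i, (c i : Fin n → F) = uv.1 i)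
              ∧ ∀ Λ ∈ D, ∑ i : Fin m, κ (Λ i) (c i) = 0)
            ∧ (∀ i : Fin m, ∀ y ∈ C, uv.2 i ⬝ᵥ y = 0))
        ∧ w = (Finset.univ.filter
            (fun ij : Fin m × Fin n => uv.1 ij.1 ij.2 ≠ 0 ∨ uv.2 ij.1 ij.2 ≠ 0)).card}
    = min
        (sInf {w : ℕ | ∃ c ∈ C, c ≠ 0 ∧ w = hammingNorm c})
        (sInf {w : ℕ | ∃ z : Fin m → Fin n → F,
            (∃ Λ ∈ D, ∀ (i : Fin m) (c : ↥C),
              Algebra.trace (ZMod p) F (z i ⬝ᵥ (c : Fin n → F)) = κ (Λ i) c)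
            ∧ ¬(∀ i : Fin m, ∀ y ∈ C, z i ⬝ᵥ y = 0)
            ∧ w = ∑ i : Fin m, hammingNorm (z i)}) :=
  stmt_10_general p n m s hsm F K C κ D hDcoord
end

section
/- Let R be a finite ring, let M be a finite abelian group equipped with both a left and a right R-module structure (an R-bimodule), and let B, B' : M × M → R be maps that are additive in each argument and satisfy B(r·x, y) = r·B(x,y) and B(x, y·r) = B(x,y)·r for all r ∈ R, x,y ∈ M (and likewise for B'). Suppose that for each of B and B', the map sending x ∈ M to the right R-module homomorphism B(x,−) : M → R is a bijection from M onto Hom(M_R, R_R), the set of all right R-module homomorphisms from M to R. Then there exists an automorphism γ of M as a left R-module such that B'(x,y) = B(γ(x), y) for all x, y ∈ M. -/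
/-- if `B, B'` are non-degenerate bilinear forms on a finite `R`-bimodule `M`
(non-degenerate in the sense that `x ↦ B(x,−)` is a bijection from `M` onto `Hom(M_R,R_R)`),
then `B'(x,y) = B(γ(x),y)` for some left `R`-module automorphism `γ` of `M`. -/
theorem stmt_16 (R M : Type) [Ring R] [Fintype R] [AddCommGroup M] [Fintype M]
    [Module R M] [Module Rᵐᵒᵖ M] [SMulCommClass R Rᵐᵒᵖ M]
    (B B' : M → M → R)
    (hBa1 : ∀ x x' y : M, B (x + x') y = B x y + B x' y)
    (hBa2 : ∀ x y y' : M, B x (y + y') = B x y + B x y')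
    (hBl : ∀ (s : R) (x y : M), B (s • x) y = s * B x y)
    (hBr : ∀ (s : R) (x y : M), B x (MulOpposite.op s • y) = B x y * s)
    (hB'a1 : ∀ x x' y : M, B' (x + x') y = B' x y + B' x' y)
    (hB'a2 : ∀ x y y' : M, B' x (y + y') = B' x y + B' x y')
    (hB'l : ∀ (s : R) (x y : M), B' (s • x) y = s * B' x y)
    (hB'r : ∀ (s : R) (x y : M), B' x (MulOpposite.op s • y) = B' x y * s)
    (hBinj : Function.Injective fun x : M => B x)
    (hBsurj : ∀ h : M → R, (∀ y y' : M, h (y + y') = h y + h y') →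
      (∀ (s : R) (y : M), h (MulOpposite.op s • y) = h y * s) → ∃ x : M, ∀ y, h y = B x y)
    (hB'inj : Function.Injective fun x : M => B' x)
    (hB'surj : ∀ h : M → R, (∀ y y' : M, h (y + y') = h y + h y') →
      (∀ (s : R) (y : M), h (MulOpposite.op s • y) = h y * s) → ∃ x : M, ∀ y, h y = B' x y) :
    ∃ γ : M → M, Function.Bijective γ
      ∧ (∀ x y : M, γ (x + y) = γ x + γ y)
      ∧ (∀ (s : R) (x : M), γ (s • x) = s • γ x)
      ∧ ∀ x y : M, B' x y = B (γ x) y := by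

  have key : ∀ x : M, ∃ z : M, ∀ y, B' x y = B z y := fun x =>
    hBsurj (B' x) (hB'a2 x) (fun s y => hB'r s x y)
  choose γ hγ using key
  have hBinj' : ∀ z z' : M, (∀ y, B z y = B z' y) → z = z' := by
    intro z z' h
    exact hBinj (funext h)
  refine ⟨γ, ⟨?_, ?_⟩, ?_, ?_, fun x y => hγ x y⟩
  · intro x x' h
    apply hB'inj
    funext y
    simp only [hγ x y, hγ x' y, h]
  · intro z
    obtain ⟨x, hx⟩ := hB'surj (B z) (hBa2 z) (fun s y => hBr s z y)
    exact ⟨x, hBinj' _ _ fun y => by rw [← hγ x y, ← hx y]⟩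
  · intro x y
    apply hBinj'
    intro w
    rw [← hγ (x + y) w, hB'a1, hBa1, ← hγ x w, ← hγ y w]
  · intro s x
    apply hBinj'
    intro w
    rw [← hγ (s • x) w, hB'l, hBl, ← hγ x w]
end

section
/- Let R be a finite ring with identity and let χ, χ' : R → ℂˣ be additive characters of R (i.e., χ(x+y) = χ(x)χ(y) for all x,y ∈ R) that are both generating characters: for every additive character ψ : R → ℂˣ there exists r ∈ R with ψ(x) = χ(rx) for all x ∈ R, and likewise there exists r' ∈ R with ψ(x) = χ'(r'x) for all x ∈ R. Then there exists a unit a ∈ R such that χ'(x) = χ(ax) for all x ∈ R. -/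
/-- if `χ` and `χ'` are two generating (additive) characters of a finite ring
`R`, then `χ' = χ^a` for some unit `a ∈ R`, i.e. `χ'(x) = χ(ax)` for all `x`. -/
theorem stmt_18 (R : Type) [Ring R] [Fintype R]
    (χ χ' : AddChar R ℂ)
    (hχ : ∀ ψ : AddChar R ℂ, ∃ s : R, ∀ x : R, ψ x = χ (s * x))
    (hχ' : ∀ ψ : AddChar R ℂ, ∃ s : R, ∀ x : R, ψ x = χ' (s * x)) :
    ∃ a : Rˣ, ∀ x : R, χ' x = χ ((a : R) * x) := by
  classical
  have key : ∀ (φ : AddChar R ℂ), (∀ ψ : AddChar R ℂ, ∃ s : R, ∀ x : R, ψ x = φ (s * x)) →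
      Function.Injective (fun s : R => φ.mulShift s) := by
    intro φ hφ
    have hsurj : Function.Surjective (fun s : R => φ.mulShift s) := by
      intro ψ
      obtain ⟨s, hs⟩ := hφ ψ
      exact ⟨s, by ext x; exact (hs x).symm⟩
    have hb : Function.Bijective (fun s : R => φ.mulShift s) :=
      (Fintype.bijective_iff_surjective_and_card _).2 ⟨hsurj, by simp⟩
    exact hb.1
  obtain ⟨a, ha⟩ := hχ χ'
  obtain ⟨b, hb⟩ := hχ' χ
  have hab : a * b = 1 := by
    apply key χ hχ
    ext x
    simp only [AddChar.mulShift_apply]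
    rw [mul_assoc, ← ha (b * x), ← hb x, one_mul]
  have hba : b * a = 1 := by
    apply key χ' hχ'
    ext x
    simp only [AddChar.mulShift_apply]
    rw [mul_assoc, ← hb (a * x), ← ha x, one_mul]
  exact ⟨⟨a, b, hab, hba⟩, ha⟩
end
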